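/- Let n ≥ 1 and let I ⊆ {1,…,n} be nonempty. Then ξ_I + δ_I(n)H_n is the unique I-canonical element for the integer lattice ℤ^n of Sp(n). Moreover its coordinates are a_j = |I ∩ {j,…,n}|, so that for every 1 ≤ k ≤ n the uniton number r_{ρ_k}(ξ_I + δ_I(n)H_n) = 2(a_1+⋯+a_k) equals 2|I| + 2|I∩{2,…,n}| + ⋯ + 2|I∩{k,…,n}|. -/

import Mathlib

/-- The duals of the simple roots of `sp(n)` (1-based index):
`H_i = E_1+⋯+E_i` for `i ≤ n-1` and `H_n = (E_1+⋯+E_n)/2`. -/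
noncomputable def Hsp (n i : ℕ) : Fin n → ℝ :=
  if i = n then fun _ => 1 / 2 else fun j => if (j : ℕ) + 1 ≤ i then 1 else 0

/-- The integer lattice `ℤ^n` inside `ℝ^n`. -/
def IntLat (n : ℕ) : Set (Fin n → ℝ) := {v | ∀ j, ∃ m : ℤ, v j = m}

/-- The set of `I`-canonical elements for a lattice `𝔏 ⊆ ℝ^n`. -/
def ICanonSet (n : ℕ) (𝔏 : Set (Fin n → ℝ)) (H : ℕ → Fin n → ℝ) (I : Finset ℕ) :
    Set (Fin n → ℝ) :=
  {ξ | ∃ c : ℕ → ℕ, (∀ i ∈ I, 1 ≤ c i) ∧ ξ = ∑ i ∈ I, c i • H i ∧ ξ ∈ 𝔏 ∧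
    ∀ c' : ℕ → ℕ, (∀ i ∈ I, 1 ≤ c' i ∧ c' i ≤ c i) →
      (∑ i ∈ I, c' i • H i) ∈ 𝔏 → (∑ i ∈ I, c' i • H i) = ξ}

/-- Sum of the first `k` (1-based) coordinates of `v`. -/
def partialSum (n : ℕ) (v : Fin n → ℝ) (k : ℕ) : ℝ :=
  ∑ j ∈ Finset.univ.filter (fun j : Fin n => (j : ℕ) + 1 ≤ k), v j

/-- `δ_I(m)`. -/
def deltaI (I : Finset ℕ) (m : ℕ) : ℕ := if m ∈ I then 1 else 0

/-!
Since `H_i ∈ ℤ^n` for `i < n` while `H_n = (E_1+⋯+E_n)/2`, a combination `∑ c_i H_i` lies in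
`ℤ^n` exactly when `c_n` is even (or `n ∉ I`). So the admissible coefficient vectors have a
least element, `c_i = 1` for `i ≠ n` and `c_n = 2`, and a least element is the unique minimal
one. As `2 H_n = E_1+⋯+E_n`, the `j`-th coordinate of the resulting element counts the
`i ∈ I` with `i ≥ j`, and the uniton numbers are partial sums of these counts.
-/

theorem ICanonSet_eq_singleton_of_forall_le {n : ℕ} {𝔏 : Set (Fin n → ℝ)}
    {H : ℕ → Fin n → ℝ} {I : Finset ℕ} (c₀ : ℕ → ℕ) (hpos : ∀ i ∈ I, 1 ≤ c₀ i)
    (hmem : ∑ i ∈ I, c₀ i • H i ∈ 𝔏)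
    (hle : ∀ c : ℕ → ℕ, (∀ i ∈ I, 1 ≤ c i) → ∑ i ∈ I, c i • H i ∈ 𝔏 → ∀ i ∈ I, c₀ i ≤ c i) :
    ICanonSet n 𝔏 H I = {∑ i ∈ I, c₀ i • H i} := by
  ext ξ
  constructor
  · rintro ⟨c, hc, rfl, hcmem, hmin⟩
    exact (hmin c₀ (fun i hi => ⟨hpos i hi, hle c hc hcmem i hi⟩) hmem).symm
  · rintro rfl
    refine ⟨c₀, hpos, rfl, hmem, fun c hc hcmem => Finset.sum_congr rfl fun i hi => ?_⟩
    rw [le_antisymm (hc i hi).2 (hle c (fun i hi => (hc i hi).1) hcmem i hi)]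

theorem exists_intCast_eq_natCast_add_half_iff (N x : ℕ) :
    (∃ m : ℤ, (N : ℝ) + x / 2 = m) ↔ Even x := by
  constructor
  · rintro ⟨m, hm⟩
    have hx : (x : ℤ) = 2 * (m - N) := by
      have : (x : ℝ) = 2 * (m - N) := by linarith
      exact_mod_cast this
    exact (Int.even_coe_nat x).mp ⟨m - N, by rw [hx]; ring⟩
  · rintro ⟨k, rfl⟩
    exact ⟨N + k, by push_cast; ring⟩

/-- The least coefficients `c` for which `∑ c i • H_i` lies in `ℤ^n`. -/
def spMinCoeff (n i : ℕ) : ℕ := if i = n then 2 else 1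

theorem sum_spMinCoeff_smul {M : Type*} [AddCommMonoid M] (H : ℕ → M) (I : Finset ℕ) (n : ℕ) :
    ∑ i ∈ I, spMinCoeff n i • H i = ∑ i ∈ I, H i + deltaI I n • H n := by
  have hsplit : ∀ i, spMinCoeff n i • H i = H i + if i = n then H i else 0 := by
    intro i
    by_cases h : i = n <;> simp [spMinCoeff, h, two_smul]
  rw [Finset.sum_congr rfl fun i _ => hsplit i, Finset.sum_add_distrib, Finset.sum_ite_eq']
  by_cases hn : n ∈ I <;> simp [deltaI, hn]

theorem smul_Hsp_apply (n i c : ℕ) (j : Fin n) :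
    (c • Hsp n i) j = ((if i ≠ n ∧ (j : ℕ) + 1 ≤ i then c else 0 : ℕ) : ℝ) +
      if i = n then (c : ℝ) / 2 else 0 := by
  by_cases h : i = n
  · simp [Hsp, h, div_eq_mul_inv]
  · by_cases hj : (j : ℕ) + 1 ≤ i <;> simp only [Hsp, h, hj, if_false, if_true, ne_eq,
      not_false_eq_true, and_true, and_false, Pi.smul_apply, nsmul_eq_mul, mul_one, mul_zero,
      Nat.cast_zero, add_zero]

theorem sum_smul_Hsp_apply (n : ℕ) (I : Finset ℕ) (c : ℕ → ℕ) (j : Fin n) :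
    (∑ i ∈ I, c i • Hsp n i) j =
      ((∑ i ∈ I, if i ≠ n ∧ (j : ℕ) + 1 ≤ i then c i else 0 : ℕ) : ℝ) +
        if n ∈ I then (c n : ℝ) / 2 else 0 := by
  simp only [Finset.sum_apply, smul_Hsp_apply, Finset.sum_add_distrib, Nat.cast_sum]
  rw [Finset.sum_ite_eq' I n (fun i => (c i : ℝ) / 2)]

theorem sum_smul_Hsp_mem_intLat_iff {n : ℕ} (hn : 1 ≤ n) (I : Finset ℕ) (c : ℕ → ℕ) :
    ∑ i ∈ I, c i • Hsp n i ∈ IntLat n ↔ (n ∈ I → Even (c n)) := by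
  have : Nonempty (Fin n) := ⟨⟨0, hn⟩⟩
  simp only [IntLat, Set.mem_ofPred_eq, sum_smul_Hsp_apply]
  by_cases hnI : n ∈ I
  · simp only [hnI, if_true, exists_intCast_eq_natCast_add_half_iff, forall_const]
  · simp only [hnI, if_false, add_zero, false_imp_iff, iff_true]
    exact fun j => ⟨_, (Int.cast_natCast _).symm⟩

theorem ICanonSet_Hsp_intLat {n : ℕ} (hn : 1 ≤ n) (I : Finset ℕ) :
    ICanonSet n (IntLat n) (Hsp n) I = {∑ i ∈ I, Hsp n i + deltaI I n • Hsp n n} := by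
  rw [← sum_spMinCoeff_smul]
  refine ICanonSet_eq_singleton_of_forall_le _ (fun i _ => ?_) ?_ fun c hc hcmem i hi => ?_
  · unfold spMinCoeff; split_ifs <;> omega
  · exact (sum_smul_Hsp_mem_intLat_iff hn I _).mpr fun _ => by simp [spMinCoeff]
  · have heven := (sum_smul_Hsp_mem_intLat_iff hn I c).mp hcmem
    by_cases h : i = n
    · subst h
      obtain ⟨k, hk⟩ := heven hi
      have := hc i hi
      simp only [spMinCoeff, if_true]
      omega
    · simpa [spMinCoeff, h] using hc i hi

theorem spMinCoeff_smul_Hsp_apply (n i : ℕ) (j : Fin n) :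
    (spMinCoeff n i • Hsp n i) j = if (j : ℕ) + 1 ≤ i then 1 else 0 := by
  by_cases h : i = n
  · subst h
    simp [spMinCoeff, Hsp]
  · simp [spMinCoeff, Hsp, h]

theorem sum_Hsp_add_deltaI_apply (n : ℕ) (I : Finset ℕ) (j : Fin n) :
    (∑ i ∈ I, Hsp n i + deltaI I n • Hsp n n) j = (I.filter fun i => (j : ℕ) + 1 ≤ i).card := by
  rw [← sum_spMinCoeff_smul, Finset.sum_apply]
  simp only [spMinCoeff_smul_Hsp_apply, Finset.sum_boole]

theorem sum_fin_filter_succ_le_eq_sum_Icc {M : Type*} [AddCommMonoid M] (f : ℕ → M) {n k : ℕ}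
    (hk : k ≤ n) :
    ∑ j ∈ Finset.univ.filter (fun j : Fin n => (j : ℕ) + 1 ≤ k), f ((j : ℕ) + 1) =
      ∑ t ∈ Finset.Icc 1 k, f t := by
  rw [Finset.sum_filter, Fin.sum_univ_eq_sum_range (fun j => if j + 1 ≤ k then f (j + 1) else 0),
    ← Finset.sum_filter]
  have hrange : (Finset.range n).filter (fun j => j + 1 ≤ k) = Finset.Ico 0 k := by
    ext j; simp only [Finset.mem_filter, Finset.mem_range, Finset.mem_Ico]; omega
  rw [hrange, Finset.sum_Ico_add', zero_add, Finset.Ico_add_one_right_eq_Icc]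

theorem sp_canonical_general (n : ℕ) (hn : 1 ≤ n) (I : Finset ℕ) :
    ICanonSet n (IntLat n) (Hsp n) I =
      {(∑ i ∈ I, Hsp n i) + deltaI I n • Hsp n n} ∧
    (∀ j : Fin n, ((∑ i ∈ I, Hsp n i) + deltaI I n • Hsp n n) j =
      ((I.filter fun i => (j : ℕ) + 1 ≤ i).card : ℝ)) ∧
    (∀ k : ℕ, 1 ≤ k → k ≤ n →
      2 * partialSum n ((∑ i ∈ I, Hsp n i) + deltaI I n • Hsp n n) k =
        2 * ∑ t ∈ Finset.Icc 1 k, ((I.filter fun i => t ≤ i).card : ℝ)) := by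
  refine ⟨ICanonSet_Hsp_intLat hn I, sum_Hsp_add_deltaI_apply n I, fun k _ hkn => ?_⟩
  rw [partialSum, Finset.sum_congr rfl fun j _ => sum_Hsp_add_deltaI_apply n I j,
    sum_fin_filter_succ_le_eq_sum_Icc (fun t => ((I.filter fun i => t ≤ i).card : ℝ)) hkn]

/-- `ξ_I + δ_I(n) H_n` is the unique `I`-canonical element of `Sp(n)`;
its coordinates are `a_j = |I ∩ {j,…,n}|` and, for `1 ≤ k ≤ n`, its uniton number for
`ρ_k` is `2(a_1+⋯+a_k) = 2Σ_{t=1}^k |I∩{t,…,n}|`. -/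
theorem sp_canonical (n : ℕ) (hn : 1 ≤ n) (I : Finset ℕ)
    (hI : I ⊆ Finset.Icc 1 n) (hne : I.Nonempty) :
    ICanonSet n (IntLat n) (Hsp n) I =
      {(∑ i ∈ I, Hsp n i) + deltaI I n • Hsp n n} ∧
    (∀ j : Fin n, ((∑ i ∈ I, Hsp n i) + deltaI I n • Hsp n n) j =
      ((I.filter fun i => (j : ℕ) + 1 ≤ i).card : ℝ)) ∧
    (∀ k : ℕ, 1 ≤ k → k ≤ n →
      2 * partialSum n ((∑ i ∈ I, Hsp n i) + deltaI I n • Hsp n n) k =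
        2 * ∑ t ∈ Finset.Icc 1 k, ((I.filter fun i => t ≤ i).card : ℝ)) :=
  sp_canonical_general n hn I
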